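/- Let D = ∂/∂X + Σ_{i=1}^n (a_i(X)·Y_i + b_i(X))·∂/∂Y_i be a Shamsuddin derivation of K[X, Y_1,…,Y_n] with a_i(X), b_i(X) ∈ K[X], n ≥ 1. Suppose there exist an index i ∈ {1,…,n} and a polynomial h ∈ K[X] with h'(X) = a_i(X)·h(X) + b_i(X). Then the elementary automorphism σ defined by σ(X) = X, σ(Y_i) = 2Y_i − h(X), and σ(Y_j) = Y_j for j ≠ i commutes with D; in particular σ ≠ id and Tame_D(K[X, Y_1,…,Y_n]) ≠ {id}. -/

import Mathlib

/-!
Take `σ` to be the affine substitution `Y_i ↦ c Y_i + p(X)`, invertible for `c ≠ 0`.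
Both `σ ∘ D` and `D ∘ σ` are determined by their values on the variables, and since `D` acts
on `K[X]` as `d/dX` and on `Y_i` affinely, they agree on `Y_i` exactly when
`p' = a_i p + (1 - c) b_i`. For `c = 2` and `p = -h` this is the hypothesis on `h`, and
`c ≠ 1` makes `σ` a nontrivial element of the tame isotropy group.
-/

open MvPolynomial

/-- An elementary automorphism of `K[X_1,…,X_n]`: there are an index `i`, a nonzero scalar `a`
and a polynomial `f` not involving `X i` such that `ρ (X i) = a • X i + f` and `ρ` fixes the
other variables. -/
def IsElementary {K : Type*} [CommSemiring K] {n : ℕ}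
    (ρ : MvPolynomial (Fin n) K ≃ₐ[K] MvPolynomial (Fin n) K) : Prop :=
  ∃ (i : Fin n) (a : K) (f : MvPolynomial (Fin n) K), a ≠ 0 ∧
    MvPolynomial.degreeOf i f = 0 ∧
    ρ (X i) = C a * X i + f ∧ ∀ j : Fin n, j ≠ i → ρ (X j) = X j

/-- `ρ` commutes with the derivation `D`, i.e. `ρ ∘ D = D ∘ ρ`. -/
def CommutesWith {K A : Type*} [CommRing K] [CommRing A] [Algebra K A]
    (ρ : A ≃ₐ[K] A) (D : Derivation K A A) : Prop :=
  ∀ p : A, ρ (D p) = D (ρ p)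

/-- The tame isotropy group of `D`: the subgroup of the automorphism group generated by the
elementary automorphisms commuting with `D`. -/
noncomputable def tameIsotropy {K : Type*} [CommRing K] {n : ℕ}
    (D : Derivation K (MvPolynomial (Fin n) K) (MvPolynomial (Fin n) K)) :
    Subgroup (MvPolynomial (Fin n) K ≃ₐ[K] MvPolynomial (Fin n) K) :=
  Subgroup.closure {ρ | IsElementary ρ ∧ CommutesWith ρ D}

/-- A derivation is simple if the only `D`-stable ideals are `⊥` and `⊤`. -/
def IsSimpleDerivation {K A : Type*} [CommRing K] [CommRing A] [Algebra K A]
    (D : Derivation K A A) : Prop :=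
  ∀ I : Ideal A, (∀ x ∈ I, D x ∈ I) → I = ⊥ ∨ I = ⊤

/-- A translation of `K[X_1,…,X_n]`: each variable `X j` is sent to `X j + c j`. -/
def IsTranslation {K : Type*} [CommSemiring K] {n : ℕ}
    (ρ : MvPolynomial (Fin n) K ≃ₐ[K] MvPolynomial (Fin n) K) : Prop :=
  ∃ c : Fin n → K, ∀ j : Fin n, ρ (X j) = X j + C (c j)

theorem degreeOf_aeval_X_of_ne {R ι : Type*} [CommSemiring R] {j k : ι} (hjk : j ≠ k)
    (q : Polynomial R) : degreeOf k (Polynomial.aeval (X j : MvPolynomial ι R) q) = 0 := by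
  have hq : Polynomial.aeval (X j : MvPolynomial ι R) q ∈ supported R {j} := by
    rw [supported_eq_adjoin_X, Set.image_singleton, Algebra.adjoin_singleton_eq_range_aeval]
    exact ⟨q, rfl⟩
  rw [mem_supported] at hq
  by_contra hk
  exact hjk (hq (mem_vars_iff_degreeOf_ne_zero.mpr hk)).symm

section ElementaryMap

variable {K ι : Type*} [Field K] [DecidableEq ι]

noncomputable def elementaryHom (k j : ι) (c : K) (p : Polynomial K) :
    MvPolynomial ι K →ₐ[K] MvPolynomial ι K :=
  aeval (Function.update X k (C c * X k + Polynomial.aeval (X j) p))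

variable {k j : ι} {c : K} {p : Polynomial K}

theorem elementaryHom_X_self :
    elementaryHom k j c p (X k) = C c * X k + Polynomial.aeval (X j) p := by
  simp [elementaryHom]

theorem elementaryHom_X_of_ne {l : ι} (hl : l ≠ k) : elementaryHom k j c p (X l) = X l := by
  simp [elementaryHom, hl]

theorem elementaryHom_aeval_X (hjk : j ≠ k) (q : Polynomial K) :
    elementaryHom k j c p (Polynomial.aeval (X j) q) = Polynomial.aeval (X j) q := by
  rw [← Polynomial.aeval_algHom_apply, elementaryHom_X_of_ne hjk]

theorem elementaryHom_comp (hjk : j ≠ k) (d : K) (q : Polynomial K) :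
    (elementaryHom k j c p).comp (elementaryHom k j d q) =
      elementaryHom k j (d * c) (Polynomial.C d * p + q) := by
  refine algHom_ext fun l => ?_
  obtain rfl | hl := eq_or_ne l k
  · simp only [AlgHom.comp_apply, elementaryHom_X_self, map_add, map_mul,
      elementaryHom_aeval_X hjk]
    simp [elementaryHom, mul_add, ← mul_assoc]
    ring
  · simp [elementaryHom_X_of_ne hl]

theorem elementaryHom_one_zero :
    elementaryHom k j (1 : K) 0 = AlgHom.id K (MvPolynomial ι K) := by
  refine algHom_ext fun l => ?_
  obtain rfl | hl := eq_or_ne l k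
  · simp [elementaryHom_X_self]
  · simp [elementaryHom_X_of_ne hl]

noncomputable def elementaryEquiv (hjk : j ≠ k) (hc : c ≠ 0) (p : Polynomial K) :
    MvPolynomial ι K ≃ₐ[K] MvPolynomial ι K :=
  AlgEquiv.ofAlgHom (elementaryHom k j c p) (elementaryHom k j c⁻¹ (-(Polynomial.C c⁻¹ * p)))
    (by rw [elementaryHom_comp hjk, inv_mul_cancel₀ hc, add_neg_cancel, elementaryHom_one_zero])
    (by rw [elementaryHom_comp hjk, mul_inv_cancel₀ hc, mul_neg, ← mul_assoc,
      ← Polynomial.C_mul, mul_inv_cancel₀ hc, Polynomial.C_1, one_mul, neg_add_cancel,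
      elementaryHom_one_zero])

theorem elementaryEquiv_apply (hjk : j ≠ k) (hc : c ≠ 0) (x : MvPolynomial ι K) :
    elementaryEquiv hjk hc p x = elementaryHom k j c p x :=
  rfl

theorem elementaryEquiv_ne_one (hjk : j ≠ k) (hc : c ≠ 0) (hc1 : c ≠ 1) :
    elementaryEquiv hjk hc p ≠ 1 := by
  intro h
  have hX := congrArg (pderiv k) (DFunLike.congr_fun h (X k))
  rw [elementaryEquiv_apply, elementaryHom_X_self, AlgEquiv.one_apply, map_add,
    Derivation.map_aeval, pderiv_X_of_ne hjk, smul_zero, add_zero, pderiv_C_mul,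
    pderiv_X_self, mul_one, ← C_1, C_inj] at hX
  exact hc1 hX

theorem isElementary_elementaryEquiv {m : ℕ} {k j : Fin m} (hjk : j ≠ k) (hc : c ≠ 0) :
    IsElementary (elementaryEquiv hjk hc p) :=
  ⟨k, c, _, hc, degreeOf_aeval_X_of_ne hjk p, elementaryHom_X_self,
    fun _ hl => elementaryHom_X_of_ne hl⟩

end ElementaryMap

theorem commutesWith_of_X {K ι : Type*} [CommRing K]
    (ρ : MvPolynomial ι K ≃ₐ[K] MvPolynomial ι K)
    (D : Derivation K (MvPolynomial ι K) (MvPolynomial ι K))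
    (h : ∀ k, ρ (D (X k)) = D (ρ (X k))) :
    CommutesWith ρ D := by
  intro p
  induction p using MvPolynomial.induction_on with
  | C c => simp only [← algebraMap_eq, Derivation.map_algebraMap, map_zero, AlgEquiv.commutes]
  | add p q hp hq => simp only [map_add, hp, hq]
  | mul_X p k hp => simp only [Derivation.leibniz, smul_eq_mul, map_add, map_mul, hp, h k]

theorem tameIsotropy_ne_bot {K : Type*} [CommRing K] {m : ℕ}
    {D : Derivation K (MvPolynomial (Fin m) K) (MvPolynomial (Fin m) K)}
    {ρ : MvPolynomial (Fin m) K ≃ₐ[K] MvPolynomial (Fin m) K} (hel : IsElementary ρ)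
    (hcomm : CommutesWith ρ D) (hne : ρ ≠ 1) : tameIsotropy D ≠ ⊥ := fun hbot =>
  hne <| (Subgroup.mem_bot).mp (hbot ▸ Subgroup.subset_closure ⟨hel, hcomm⟩)

section Shamsuddin

variable {K : Type*} [CommRing K] {n : ℕ}

noncomputable def shamsuddin (a b : Fin n → Polynomial K) :
    Derivation K (MvPolynomial (Fin (n + 1)) K) (MvPolynomial (Fin (n + 1)) K) :=
  pderiv 0 + ∑ i : Fin n, (Polynomial.aeval (X 0 : MvPolynomial (Fin (n + 1)) K) (a i) * X i.succ
    + Polynomial.aeval (X 0 : MvPolynomial (Fin (n + 1)) K) (b i)) • pderiv i.succ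

variable (a b : Fin n → Polynomial K)

theorem shamsuddin_apply (f : MvPolynomial (Fin (n + 1)) K) :
    shamsuddin a b f = pderiv 0 f + ∑ i : Fin n,
      (Polynomial.aeval (X 0) (a i) * X i.succ + Polynomial.aeval (X 0) (b i)) *
        pderiv i.succ f := by
  rw [shamsuddin, Derivation.add_apply, ← Derivation.coeFnAddMonoidHom_apply (∑ i : Fin n, _),
    map_sum, Finset.sum_apply]
  simp only [Derivation.coeFnAddMonoidHom_apply, Derivation.smul_apply, smul_eq_mul]

theorem shamsuddin_X_zero : shamsuddin a b (X 0) = 1 := by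
  simp [shamsuddin_apply, pderiv_X_of_ne (Fin.succ_ne_zero _).symm]

theorem shamsuddin_X_succ (j : Fin n) :
    shamsuddin a b (X j.succ) =
      Polynomial.aeval (X 0) (a j) * X j.succ + Polynomial.aeval (X 0) (b j) := by
  simp [shamsuddin_apply, pderiv_X, Fin.succ_ne_zero, Pi.single_apply]

theorem shamsuddin_aeval_X_zero (q : Polynomial K) :
    shamsuddin a b (Polynomial.aeval (X 0) q) =
      Polynomial.aeval (X 0) (Polynomial.derivative q) := by
  rw [Derivation.map_aeval, shamsuddin_X_zero, smul_eq_mul, mul_one]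

end Shamsuddin

theorem commutesWith_shamsuddin_elementaryEquiv {K : Type*} [Field K] {n : ℕ}
    (a b : Fin n → Polynomial K) (i : Fin n) {c : K} (hc : c ≠ 0) {p : Polynomial K}
    (hp : Polynomial.derivative p = a i * p + Polynomial.C (1 - c) * b i) :
    CommutesWith (elementaryEquiv (Fin.succ_ne_zero i).symm hc p) (shamsuddin a b) := by
  have hi : (0 : Fin (n + 1)) ≠ i.succ := (Fin.succ_ne_zero i).symm
  refine commutesWith_of_X _ _ fun k => ?_
  simp only [elementaryEquiv_apply]
  induction k using Fin.cases with
  | zero => rw [shamsuddin_X_zero, map_one, elementaryHom_X_of_ne hi, shamsuddin_X_zero]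
  | succ j =>
    rw [shamsuddin_X_succ, map_add, map_mul, elementaryHom_aeval_X hi, elementaryHom_aeval_X hi]
    obtain rfl | hj := eq_or_ne j i
    · rw [elementaryHom_X_self, map_add, ← smul_eq_C_mul, Derivation.map_smul,
        shamsuddin_aeval_X_zero, hp, shamsuddin_X_succ]
      simp only [map_add, map_mul, Polynomial.aeval_C, algebraMap_eq, map_sub, map_one,
        smul_eq_C_mul]
      ring
    · rw [elementaryHom_X_of_ne (Fin.succ_injective n |>.ne hj), shamsuddin_X_succ]

theorem stmt_17_general {K : Type*} [Field K] [CharZero K]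
    (n : ℕ) (a b : Fin n → Polynomial K)
    (D : Derivation K (MvPolynomial (Fin (n + 1)) K) (MvPolynomial (Fin (n + 1)) K))
    (hD : D = pderiv (0 : Fin (n + 1)) + ∑ i : Fin n,
      (Polynomial.aeval (X 0 : MvPolynomial (Fin (n + 1)) K) (a i) * X i.succ
        + Polynomial.aeval (X 0 : MvPolynomial (Fin (n + 1)) K) (b i)) • pderiv i.succ)
    (i : Fin n) (h : Polynomial K)
    (hh : Polynomial.derivative h = a i * h + b i) :
    ∃ σ : MvPolynomial (Fin (n + 1)) K ≃ₐ[K] MvPolynomial (Fin (n + 1)) K,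
      σ (X 0) = X 0 ∧
      σ (X i.succ) = 2 * X i.succ
        - Polynomial.aeval (X 0 : MvPolynomial (Fin (n + 1)) K) h ∧
      (∀ j : Fin n, j ≠ i → σ (X j.succ) = X j.succ) ∧
      IsElementary σ ∧ CommutesWith σ D ∧ σ ≠ 1 ∧ tameIsotropy D ≠ ⊥ := by
  have hi : (0 : Fin (n + 1)) ≠ i.succ := (Fin.succ_ne_zero i).symm
  have hp : Polynomial.derivative (-h) = a i * (-h) + Polynomial.C (1 - 2 : K) * b i := by
    rw [Polynomial.derivative_neg, hh, show (1 - 2 : K) = -1 by norm_num, Polynomial.C_neg,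
      Polynomial.C_1]
    ring
  let σ := elementaryEquiv hi two_ne_zero (-h)
  have hcomm : CommutesWith σ D := hD ▸ commutesWith_shamsuddin_elementaryEquiv a b i _ hp
  have hel : IsElementary σ := isElementary_elementaryEquiv hi _
  have hne : σ ≠ 1 := elementaryEquiv_ne_one hi _ (by norm_num)
  refine ⟨σ, elementaryHom_X_of_ne hi, ?_, fun j hj => elementaryHom_X_of_ne ?_, hel, hcomm, hne,
    tameIsotropy_ne_bot hel hcomm hne⟩
  · rw [elementaryEquiv_apply, elementaryHom_X_self, map_neg, map_ofNat, sub_eq_add_neg]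
  · exact (Fin.succ_injective n).ne hj

/-- Let `D = ∂/∂X + Σ (a_i(X)·Y_i + b_i(X))·∂/∂Y_i` be a Shamsuddin derivation of
`K[X,Y_1,…,Y_n]`, `n ≥ 1`. If for some index `i` there is `h ∈ K[X]` with
`h' = a_i·h + b_i`, then the elementary automorphism `σ` with `σ(X) = X`,
`σ(Y_i) = 2Y_i − h(X)` and `σ(Y_j) = Y_j` for `j ≠ i` commutes with `D`; in particular
`σ ≠ id` and `Tame_D ≠ {id}`. -/
theorem stmt_17 {K : Type*} [Field K] [CharZero K] [IsAlgClosed K]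
    (n : ℕ) (hn : 1 ≤ n) (a b : Fin n → Polynomial K)
    (D : Derivation K (MvPolynomial (Fin (n + 1)) K) (MvPolynomial (Fin (n + 1)) K))
    (hD : D = pderiv (0 : Fin (n + 1)) + ∑ i : Fin n,
      (Polynomial.aeval (X 0 : MvPolynomial (Fin (n + 1)) K) (a i) * X i.succ
        + Polynomial.aeval (X 0 : MvPolynomial (Fin (n + 1)) K) (b i)) • pderiv i.succ)
    (i : Fin n) (h : Polynomial K)
    (hh : Polynomial.derivative h = a i * h + b i) :
    ∃ σ : MvPolynomial (Fin (n + 1)) K ≃ₐ[K] MvPolynomial (Fin (n + 1)) K,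
      σ (X 0) = X 0 ∧
      σ (X i.succ) = 2 * X i.succ
        - Polynomial.aeval (X 0 : MvPolynomial (Fin (n + 1)) K) h ∧
      (∀ j : Fin n, j ≠ i → σ (X j.succ) = X j.succ) ∧
      IsElementary σ ∧ CommutesWith σ D ∧ σ ≠ 1 ∧ tameIsotropy D ≠ ⊥ :=
  stmt_17_general n a b D hD i h hh
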